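/- arXiv:2109.06647 — 5 statements merged into one kernel-verified Lean document; each statement's English description precedes it below -/
import Mathlib

section
/- Let X and Y be real normed vector spaces, Ŵ ⊆ X and W ⊆ Y linear subspaces, 𝔄 : X × Y → ℝ a bilinear map, and C : Y → Y a linear map with C(Y) ⊆ W. Let c > 0 and β̄ > 0 be constants such that: (i) for every v ∈ Ŵ, sup over nonzero y ∈ Y of 𝔄(v, y)/‖y‖_Y is ≥ c·‖v‖_X; (ii) 𝔄(v, C w) = −𝔄(v, w) for all v ∈ Ŵ and all w ∈ Y; (iii) ‖C w‖_Y ≤ c⁻¹·√2·max{1, β̄}·‖w‖_Y for all w ∈ Y. Then for every v ∈ Ŵ, the sup over nonzero w ∈ W of 𝔄(v, w)/‖w‖_Y is ≥ (c²/(√2·max{1, β̄}))·‖v‖_X. -/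
/-- Abstract form of Lemma 3.4 (inf-sup condition on the fine-scale remainder spaces)
from Ljung–Maier–Målqvist, "A Space-Time Multiscale Method for Parabolic Problems". -/
theorem infsup_remainder_spaces
    {X Y : Type*} [NormedAddCommGroup X] [NormedSpace ℝ X]
    [NormedAddCommGroup Y] [NormedSpace ℝ Y]
    (What : Submodule ℝ X) (W : Submodule ℝ Y)
    (𝔄 : X →ₗ[ℝ] Y →ₗ[ℝ] ℝ) (C : Y →ₗ[ℝ] Y)
    (hCW : ∀ w : Y, C w ∈ W)
    (c β : ℝ) (hc : 0 < c) (hβ : 0 < β)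
    (hinf : ∀ v ∈ What, c * ‖v‖ ≤ ⨆ y : {y : Y // y ≠ 0}, 𝔄 v (y : Y) / ‖(y : Y)‖)
    (hCorr : ∀ v ∈ What, ∀ w : Y, 𝔄 v (C w) = - 𝔄 v w)
    (hCbound : ∀ w : Y, ‖C w‖ ≤ c⁻¹ * Real.sqrt 2 * max 1 β * ‖w‖) :
    ∀ v ∈ What,
      (c ^ 2 / (Real.sqrt 2 * max 1 β)) * ‖v‖ ≤
        ⨆ w : {w : Y // w ∈ W ∧ w ≠ 0}, 𝔄 v (w : Y) / ‖(w : Y)‖ := by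
  intro v hv
  set K : ℝ := Real.sqrt 2 * max 1 β with hKdef
  have hK0 : 0 < K := mul_pos (Real.sqrt_pos.mpr two_pos) (lt_max_of_lt_left one_pos)
  set fW : {w : Y // w ∈ W ∧ w ≠ 0} → ℝ := fun w => 𝔄 v (w : Y) / ‖(w : Y)‖ with hfW
  set S : ℝ := ⨆ w : {w : Y // w ∈ W ∧ w ≠ 0}, fW w with hSdef
  -- S is nonnegative
  have hS0 : 0 ≤ S := by
    rcases isEmpty_or_nonempty {w : Y // w ∈ W ∧ w ≠ 0} with h | h
    · simp [hSdef, Real.iSup_of_isEmpty]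
    · by_cases hb : BddAbove (Set.range fW)
      · obtain ⟨w0⟩ := h
        have h1 : fW w0 ≤ S := le_ciSup hb w0
        have h2 : fW ⟨-w0.1, W.neg_mem w0.2.1, neg_ne_zero.mpr w0.2.2⟩ ≤ S :=
          le_ciSup hb _
        simp only [hfW, map_neg, norm_neg, neg_div] at h1 h2
        linarith
      · simp [hSdef, Real.iSup_of_not_bddAbove hb]
  -- the main estimate: c * ‖v‖ ≤ (K / c) * S
  have hmain : c * ‖v‖ ≤ (K / c) * S := by
    refine le_trans (hinf v hv) ?_
    by_cases hbW : BddAbove (Set.range fW)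
    · -- pointwise bound on the Y-supremum
      have hpt : ∀ y : {y : Y // y ≠ 0}, 𝔄 v (y : Y) / ‖(y : Y)‖ ≤ (K / c) * S := by
        intro ⟨y, hy⟩
        have hCy := hCorr v hv y
        by_cases hC0 : C y = 0
        · rw [hC0] at hCy
          simp only [map_zero] at hCy
          have : (𝔄 v) y = 0 := by linarith
          rw [this]
          simp only [zero_div]
          positivity
        · set w : {w : Y // w ∈ W ∧ w ≠ 0} :=
            ⟨-C y, W.neg_mem (hCW y), neg_ne_zero.mpr hC0⟩ with hw
          have ha : fW w ≤ S := le_ciSup hbW w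
          have hAEq : (𝔄 v) y = (𝔄 v) (-C y) := by
            rw [map_neg]; linarith
          have hny : (0:ℝ) < ‖y‖ := norm_pos_iff.mpr hy
          have hnw : (0:ℝ) < ‖(-C y : Y)‖ := by
            rw [norm_neg]; exact norm_pos_iff.mpr hC0
          have ht : ‖(-C y : Y)‖ / ‖y‖ ≤ K / c := by
            rw [div_le_div_iff₀ hny hc, norm_neg]
            calc ‖C y‖ * c ≤ (c⁻¹ * Real.sqrt 2 * max 1 β * ‖y‖) * c :=
                  mul_le_mul_of_nonneg_right (hCbound y) hc.le
              _ = K * ‖y‖ := by rw [hKdef]; field_simp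
          have ht0 : 0 ≤ ‖(-C y : Y)‖ / ‖y‖ := by positivity
          have hC0' : ‖C y‖ ≠ 0 := norm_ne_zero_iff.mpr hC0
          have key : (𝔄 v) y / ‖y‖ = fW w * (‖(-C y : Y)‖ / ‖y‖) := by
            simp only [hfW, hw, norm_neg]
            rw [hAEq, map_neg, div_mul_div_comm, mul_comm ‖C y‖ ‖y‖,
              mul_div_mul_right _ _ hC0']
          rw [key]
          have hKc : 0 ≤ K / c := le_of_lt (div_pos hK0 hc)
          nlinarith [mul_le_mul_of_nonneg_right ha ht0,
            mul_le_mul_of_nonneg_left ht hS0]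
      rcases isEmpty_or_nonempty {y : Y // y ≠ 0} with h | h
      · rw [Real.iSup_of_isEmpty]
        positivity
      · exact ciSup_le hpt
    · -- the W-range is unbounded; then the Y-range is unbounded too
      have hSz : S = 0 := by simp [hSdef, Real.iSup_of_not_bddAbove hbW]
      have hbY : ¬ BddAbove (Set.range fun y : {y : Y // y ≠ 0} => 𝔄 v (y : Y) / ‖(y : Y)‖) := by
        intro hb
        apply hbW
        refine hb.mono ?_
        rintro x ⟨⟨w, hwW, hw0⟩, rfl⟩
        exact ⟨⟨w, hw0⟩, rfl⟩
      rw [Real.iSup_of_not_bddAbove hbY, hSz]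
      simp
  -- conclude
  have : c ^ 2 / K * ‖v‖ ≤ S := by
    have h2 := mul_le_mul_of_nonneg_left hmain (le_of_lt (div_pos hc hK0))
    calc c ^ 2 / K * ‖v‖ = (c / K) * (c * ‖v‖) := by ring
      _ ≤ (c / K) * ((K / c) * S) := h2
      _ = S := by field_simp
  exact this
end

section
/- Let X and Y be real normed vector spaces, V_H ⊆ X and Y_H ⊆ Y linear subspaces, 𝔄 : X × Y → ℝ a bilinear map, Q : V_H → X and Q' : V_H → X linear maps, and 𝔉 : Y → Y a linear map with 𝔉(Y) ⊆ Y_H. Let c, β̄, C_int, Ĉ, H > 0 be constants such that: (i) for every x ∈ X, sup over nonzero y ∈ Y of 𝔄(x, y)/‖y‖_Y ≥ c·‖x‖_X; (ii) ‖𝔉 w‖_Y ≤ C_int·‖w‖_Y and ‖w − 𝔉 w‖_Y ≤ C_int·‖w‖_Y for all w ∈ Y; (iii) |𝔄(x, y)| ≤ β̄·‖x‖_X·‖y‖_Y for all x ∈ X, y ∈ Y; (iv) 𝔄(v + Q v, w − 𝔉 w) = 0 for all v ∈ V_H and all w ∈ Y; (v) ‖v‖_X ≤ Ĉ·H⁻¹·‖v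 + Q' v‖_X for all v ∈ V_H; (vi) ‖Q v − Q' v‖_X ≤ (c/(2·β̄·Ĉ·C_int))·H·‖v‖_X for all v ∈ V_H. Then for every nonzero v ∈ V_H, the sup over nonzero w_H ∈ Y_H of 𝔄(v + Q' v, w_H)/(‖v + Q' v‖_X · ‖w_H‖_Y) is ≥ c/(2·C_int). -/
/-- Abstract form of Lemma 4.2 (a posteriori inf-sup condition for the localized
multiscale method) from Ljung–Maier–Målqvist, "A Space-Time Multiscale Method for
Parabolic Problems". -/
theorem aposteriori_infsup
    {X Y : Type*} [NormedAddCommGroup X] [NormedSpace ℝ X]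
    [NormedAddCommGroup Y] [NormedSpace ℝ Y]
    (VH : Submodule ℝ X) (YH : Submodule ℝ Y)
    (𝔄 : X →ₗ[ℝ] Y →ₗ[ℝ] ℝ)
    (Q Q' : VH →ₗ[ℝ] X) (𝔉 : Y →ₗ[ℝ] Y)
    (h𝔉mem : ∀ y : Y, 𝔉 y ∈ YH)
    (c β Cint Chat H : ℝ)
    (hc : 0 < c) (hβ : 0 < β) (hCint : 0 < Cint) (hChat : 0 < Chat) (hH : 0 < H)
    (hinf : ∀ x : X, c * ‖x‖ ≤ ⨆ y : {y : Y // y ≠ 0}, 𝔄 x (y : Y) / ‖(y : Y)‖)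
    (h𝔉stab : ∀ w : Y, ‖𝔉 w‖ ≤ Cint * ‖w‖)
    (h𝔉stab' : ∀ w : Y, ‖w - 𝔉 w‖ ≤ Cint * ‖w‖)
    (h𝔄bdd : ∀ (x : X) (y : Y), |𝔄 x y| ≤ β * ‖x‖ * ‖y‖)
    (horth : ∀ (v : VH) (w : Y), 𝔄 ((v : X) + Q v) (w - 𝔉 w) = 0)
    (hinterp : ∀ v : VH, ‖(v : X)‖ ≤ Chat * H⁻¹ * ‖(v : X) + Q' v‖)
    (hloc : ∀ v : VH, ‖Q v - Q' v‖ ≤ (c / (2 * β * Chat * Cint)) * H * ‖(v : X)‖) :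
    ∀ v : VH, v ≠ 0 →
      c / (2 * Cint) ≤
        ⨆ wH : {w : Y // w ∈ YH ∧ w ≠ 0},
          𝔄 ((v : X) + Q' v) (wH : Y) / (‖(v : X) + Q' v‖ * ‖(wH : Y)‖) := by
  intro v hv
  set u : X := (v : X) + Q' v with hu
  have hvX : (v : X) ≠ 0 := fun h => hv (Subtype.ext h)
  have hvpos : 0 < ‖(v : X)‖ := norm_pos_iff.mpr hvX
  have hupos : 0 < ‖u‖ := by
    by_contra h
    push_neg at h
    have h0 : ‖u‖ = 0 := le_antisymm h (norm_nonneg _)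
    have h1 := hinterp v
    rw [← hu, h0] at h1
    nlinarith
  set S : ℝ := ⨆ wH : {w : Y // w ∈ YH ∧ w ≠ 0}, 𝔄 u (wH : Y) / (‖u‖ * ‖(wH : Y)‖)
    with hS
  -- boundedness of the family defining S
  have hbdd : BddAbove (Set.range fun wH : {w : Y // w ∈ YH ∧ w ≠ 0} =>
      𝔄 u (wH : Y) / (‖u‖ * ‖(wH : Y)‖)) := by
    refine ⟨β, ?_⟩
    rintro x ⟨w, rfl⟩
    have hw : 0 < ‖(w : Y)‖ := norm_pos_iff.mpr w.2.2
    rw [div_le_iff₀ (by positivity)]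
    calc 𝔄 u (w : Y) ≤ |𝔄 u (w : Y)| := le_abs_self _
      _ ≤ β * ‖u‖ * ‖(w : Y)‖ := h𝔄bdd _ _
      _ = β * (‖u‖ * ‖(w : Y)‖) := by ring
  -- S is nonnegative
  have hS0 : 0 ≤ S := by
    by_cases hne : Nonempty {w : Y // w ∈ YH ∧ w ≠ 0}
    · obtain ⟨w⟩ := hne
      have hw' : (-(w : Y)) ∈ YH ∧ -(w : Y) ≠ 0 :=
        ⟨YH.neg_mem w.2.1, neg_ne_zero.mpr w.2.2⟩
      have h1 := le_ciSup hbdd w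
      have h2 := le_ciSup hbdd (⟨-(w : Y), hw'⟩ : {w : Y // w ∈ YH ∧ w ≠ 0})
      simp only [map_neg, norm_neg, neg_div] at h2
      rw [← hS] at h1 h2
      linarith
    · have hie : IsEmpty {w : Y // w ∈ YH ∧ w ≠ 0} := not_nonempty_iff.mp hne
      rw [hS, Real.iSup_of_isEmpty]
  -- nonemptiness of the nonzero test functions
  have hYne : Nonempty {y : Y // y ≠ 0} := by
    by_contra h
    have hie : IsEmpty {y : Y // y ≠ 0} := not_nonempty_iff.mp h
    have h1 := hinf u
    rw [Real.iSup_of_isEmpty] at h1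
    nlinarith
  -- pointwise bound
  have key : ∀ y : {y : Y // y ≠ 0},
      𝔄 u (y : Y) / ‖(y : Y)‖ ≤ Cint * S * ‖u‖ + β * Cint * ‖Q v - Q' v‖ := by
    intro y
    have hy : 0 < ‖(y : Y)‖ := norm_pos_iff.mpr y.2
    rw [div_le_iff₀ hy]
    have hsplit : 𝔄 u (y : Y)
        = 𝔄 u (𝔉 (y : Y)) + 𝔄 ((Q' v : X) - Q v) ((y : Y) - 𝔉 (y : Y)) := by
      have e1 : u = ((v : X) + Q v) + ((Q' v : X) - Q v) := by rw [hu]; abel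
      have e3 : 𝔄 u ((y : Y) - 𝔉 (y : Y))
          = 𝔄 ((Q' v : X) - Q v) ((y : Y) - 𝔉 (y : Y)) := by
        rw [e1, map_add, LinearMap.add_apply, horth v (y : Y), zero_add]
      have e2 : 𝔄 u (y : Y) = 𝔄 u (𝔉 (y : Y)) + 𝔄 u ((y : Y) - 𝔉 (y : Y)) := by
        rw [map_sub]; ring
      rw [e2, e3]
    have hb1 : 𝔄 u (𝔉 (y : Y)) ≤ S * ‖u‖ * (Cint * ‖(y : Y)‖) := by
      by_cases hfy : 𝔉 (y : Y) = 0
      · rw [hfy, map_zero]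
        have : (0:ℝ) ≤ S * ‖u‖ * (Cint * ‖(y : Y)‖) := by
          apply mul_nonneg (mul_nonneg hS0 (norm_nonneg _))
          positivity
        exact this
      · have hfpos : 0 < ‖𝔉 (y : Y)‖ := norm_pos_iff.mpr hfy
        have h1 := le_ciSup hbdd (⟨𝔉 (y : Y), h𝔉mem _, hfy⟩ : {w : Y // w ∈ YH ∧ w ≠ 0})
        rw [← hS] at h1
        simp only at h1
        rw [div_le_iff₀ (by positivity)] at h1
        have h2 := h𝔉stab (y : Y)
        calc 𝔄 u (𝔉 (y : Y)) ≤ S * (‖u‖ * ‖𝔉 (y : Y)‖) := h1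
          _ ≤ S * ‖u‖ * (Cint * ‖(y : Y)‖) := by
              nlinarith [mul_nonneg hS0 (norm_nonneg u)]
    have hb2 : 𝔄 ((Q' v : X) - Q v) ((y : Y) - 𝔉 (y : Y))
        ≤ β * Cint * ‖Q v - Q' v‖ * ‖(y : Y)‖ := by
      have h1 : 𝔄 ((Q' v : X) - Q v) ((y : Y) - 𝔉 (y : Y))
          ≤ β * ‖(Q' v : X) - Q v‖ * ‖(y : Y) - 𝔉 (y : Y)‖ :=
        le_trans (le_abs_self _) (h𝔄bdd _ _)
      have h2 : ‖(Q' v : X) - Q v‖ = ‖Q v - Q' v‖ := norm_sub_rev _ _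
      have h3 := h𝔉stab' (y : Y)
      rw [h2] at h1
      refine h1.trans ?_
      have h4 : β * ‖Q v - Q' v‖ * ‖(y : Y) - 𝔉 (y : Y)‖
          ≤ β * ‖Q v - Q' v‖ * (Cint * ‖(y : Y)‖) :=
        mul_le_mul_of_nonneg_left h3 (by positivity)
      calc β * ‖Q v - Q' v‖ * ‖(y : Y) - 𝔉 (y : Y)‖
          ≤ β * ‖Q v - Q' v‖ * (Cint * ‖(y : Y)‖) := h4
        _ = β * Cint * ‖Q v - Q' v‖ * ‖(y : Y)‖ := by ring
    nlinarith
  have main : c * ‖u‖ ≤ Cint * S * ‖u‖ + β * Cint * ‖Q v - Q' v‖ :=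
    le_trans (hinf u) (ciSup_le key)
  -- bound the localization term
  have hloc2 : β * Cint * ‖Q v - Q' v‖ ≤ (c / 2) * ‖u‖ := by
    have h1 := hloc v
    have h2 := hinterp v
    rw [← hu] at h2
    have hk : 0 < c / (2 * β * Chat * Cint) := by positivity
    have h3 : ‖Q v - Q' v‖ ≤ (c / (2 * β * Chat * Cint)) * H * (Chat * H⁻¹ * ‖u‖) := by
      calc ‖Q v - Q' v‖ ≤ (c / (2 * β * Chat * Cint)) * H * ‖(v : X)‖ := h1
        _ ≤ (c / (2 * β * Chat * Cint)) * H * (Chat * H⁻¹ * ‖u‖) := by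
            apply mul_le_mul_of_nonneg_left h2 (by positivity)
    have heq : β * Cint * ((c / (2 * β * Chat * Cint)) * H * (Chat * H⁻¹ * ‖u‖))
        = (c / 2) * ‖u‖ := by
      field_simp
    calc β * Cint * ‖Q v - Q' v‖
        ≤ β * Cint * ((c / (2 * β * Chat * Cint)) * H * (Chat * H⁻¹ * ‖u‖)) := by
          apply mul_le_mul_of_nonneg_left h3 (by positivity)
      _ = (c / 2) * ‖u‖ := heq
  have hfinal : (c / 2) * ‖u‖ ≤ Cint * S * ‖u‖ := by linarith
  have hdiv : c / 2 ≤ Cint * S := le_of_mul_le_mul_right hfinal hupos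
  rw [div_le_iff₀ (by positivity : (0:ℝ) < 2 * Cint)]
  nlinarith
end

section
/- Let X be a real Hilbert space, Y a real normed vector space, and 𝔄 : X × Y → ℝ a bilinear map with |𝔄(x, y)| ≤ M·‖x‖_X·‖y‖_Y for all x, y, where M > 0. Let S ⊆ X be a linear subspace containing a nonzero vector, Y_H ⊆ Y a linear subspace, and ĉ > 0 a constant such that for every s ∈ S, sup over nonzero w ∈ Y_H of 𝔄(s, w)/‖w‖_Y ≥ ĉ·‖s‖_X. Let R : X → X be a linear map with R(X) ⊆ S, with R s = s for every s ∈ S, and with the Galerkin orthogonality 𝔄(x − R x, w) = 0 for all x ∈ X and all w ∈ Y_H. Then for every x ∈ X and every s ∈ S, ‖x − R x‖_X ≤ ĉ⁻¹·M·‖x − s‖_X. -/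
/-!
Galerkin orthogonality gives `𝔄 (R z) w = 𝔄 z w` for `w ∈ Y_H`, so the inf-sup condition on `S`
and the continuity of `𝔄` bound `‖R z‖ ≤ ĉ⁻¹ M ‖z‖`; as `R` fixes a nonzero vector, `ĉ⁻¹ M ≥ 1`.
For a projection in a Hilbert space, Xu and Zikatanov's argument transfers such a bound from `R`
to `Id - R`. Apply it to `x - s = (x - R x) + (R x - s)`, a sum of a vector of the kernel and a
vector of the range of `R`.
-/

open scoped RealInnerProductSpace

theorem norm_sq_smul_sub_inner_smul {E : Type*} [SeminormedAddCommGroup E]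
    [InnerProductSpace ℝ E] (u v : E) :
    ‖‖u‖ ^ 2 • v - ⟪u, v⟫ • u‖ ^ 2 = ‖u‖ ^ 2 * (‖u‖ ^ 2 * ‖v‖ ^ 2 - ⟪u, v⟫ ^ 2) := by
  rw [norm_sub_sq_real]
  simp only [norm_smul, real_inner_smul_left, real_inner_smul_right, real_inner_comm u v,
    Real.norm_eq_abs, mul_pow, sq_abs]
  ring

namespace LinearMap

variable {E : Type*} [NormedAddCommGroup E] [InnerProductSpace ℝ E]

/-- Pointwise form of the Xu–Zikatanov identity `‖Id - P‖ = ‖P‖` for projections. -/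
theorem norm_le_mul_norm_add_of_apply_eq_zero_of_apply_eq_self (P : E →ₗ[ℝ] E) {c : ℝ}
    (hc : 1 ≤ c) (hP : ∀ z, ‖P z‖ ≤ c * ‖z‖) {u v : E} (hu : P u = 0) (hv : P v = v) :
    ‖u‖ ≤ c * ‖u + v‖ := by
  rcases eq_or_ne v 0 with rfl | hv0
  · rw [add_zero]
    exact le_mul_of_one_le_left (norm_nonneg u) hc
  rcases eq_or_ne u 0 with rfl | hu0
  · rw [norm_zero]
    positivity
  -- `P` maps this vector, orthogonal to `u`, to `‖u‖² v`.
  have htest := hP (‖u‖ ^ 2 • v - ⟪u, v⟫ • u)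
  rw [map_sub, map_smul, map_smul, hu, hv, smul_zero, sub_zero, norm_smul, Real.norm_eq_abs,
    abs_of_nonneg (sq_nonneg _)] at htest
  have htest_sq : (‖u‖ ^ 2 * ‖v‖) ^ 2 ≤ c ^ 2 * (‖u‖ ^ 2 * (‖u‖ ^ 2 * ‖v‖ ^ 2 - ⟪u, v⟫ ^ 2)) := by
    rw [← norm_sq_smul_sub_inner_smul, ← mul_pow]
    exact pow_le_pow_left₀ (by positivity) htest 2
  rw [← pow_le_pow_iff_left₀ (norm_nonneg u) (by positivity) two_ne_zero, mul_pow,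
    norm_add_sq_real]
  have hu_pos : 0 < ‖u‖ := norm_pos_iff.mpr hu0
  have hv_pos : 0 < ‖v‖ := norm_pos_iff.mpr hv0
  have hdiv_u : ‖u‖ ^ 2 * ‖v‖ ^ 2 ≤ c ^ 2 * (‖u‖ ^ 2 * ‖v‖ ^ 2 - ⟪u, v⟫ ^ 2) :=
    le_of_mul_le_mul_left (by linarith [htest_sq]) (pow_pos hu_pos 2)
  have hmul_v : ‖v‖ ^ 2 * ‖u‖ ^ 2 ≤ ‖v‖ ^ 2 * (c ^ 2 * (‖u‖ ^ 2 + 2 * ⟪u, v⟫ + ‖v‖ ^ 2)) := by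
    linarith [mul_nonneg (sq_nonneg c) (sq_nonneg (⟪u, v⟫ + ‖v‖ ^ 2))]
  exact le_of_mul_le_mul_left hmul_v (pow_pos hv_pos 2)

end LinearMap

theorem norm_apply_le_of_inf_sup_of_galerkin {X Y : Type*} [SeminormedAddCommGroup X]
    [Module ℝ X] [SeminormedAddCommGroup Y] [Module ℝ Y] (𝔄 : X →ₗ[ℝ] Y →ₗ[ℝ] ℝ) {M : ℝ} (hM : 0 ≤ M)
    (h𝔄bdd : ∀ x y, |𝔄 x y| ≤ M * ‖x‖ * ‖y‖) {S : Submodule ℝ X} {YH : Submodule ℝ Y}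
    {chat : ℝ} (hchat : 0 < chat)
    (hinf : ∀ s ∈ S,
      chat * ‖s‖ ≤ ⨆ w : {w : Y // w ∈ YH ∧ w ≠ 0}, 𝔄 s (w : Y) / ‖(w : Y)‖)
    {R : X →ₗ[ℝ] X} (hRS : ∀ x, R x ∈ S) (hGalerkin : ∀ x, ∀ w ∈ YH, 𝔄 (x - R x) w = 0)
    (z : X) : ‖R z‖ ≤ chat⁻¹ * M * ‖z‖ := by
  have hsup : (⨆ w : {w : Y // w ∈ YH ∧ w ≠ 0}, 𝔄 (R z) (w : Y) / ‖(w : Y)‖) ≤ M * ‖z‖ := by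
    refine Real.iSup_le (fun ⟨w, hw, _⟩ => ?_) (by positivity)
    have hRz : 𝔄 (R z) w = 𝔄 z w := by
      have h := hGalerkin z w hw
      rwa [map_sub, LinearMap.sub_apply, sub_eq_zero, eq_comm] at h
    rw [hRz]
    exact div_le_of_le_mul₀ (norm_nonneg _) (by positivity) ((le_abs_self _).trans (h𝔄bdd z w))
  rw [mul_assoc, le_inv_mul_iff₀ hchat]
  exact (hinf _ (hRS z)).trans hsup

theorem ritz_quasi_optimality_general
    {X Y : Type*} [NormedAddCommGroup X] [InnerProductSpace ℝ X]
    [NormedAddCommGroup Y] [NormedSpace ℝ Y]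
    (𝔄 : X →ₗ[ℝ] Y →ₗ[ℝ] ℝ) (M : ℝ) (hM : 0 < M)
    (h𝔄bdd : ∀ (x : X) (y : Y), |𝔄 x y| ≤ M * ‖x‖ * ‖y‖)
    (S : Submodule ℝ X) (hS : ∃ s ∈ S, s ≠ 0)
    (YH : Submodule ℝ Y)
    (chat : ℝ) (hchat : 0 < chat)
    (hinf : ∀ s ∈ S,
      chat * ‖s‖ ≤ ⨆ w : {w : Y // w ∈ YH ∧ w ≠ 0}, 𝔄 s (w : Y) / ‖(w : Y)‖)
    (R : X →ₗ[ℝ] X) (hRS : ∀ x : X, R x ∈ S)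
    (hRfix : ∀ s ∈ S, R s = s)
    (hGalerkin : ∀ x : X, ∀ w ∈ YH, 𝔄 (x - R x) w = 0) :
    ∀ x : X, ∀ s ∈ S, ‖x - R x‖ ≤ chat⁻¹ * M * ‖x - s‖ := by
  intro x s hs
  have hstab := norm_apply_le_of_inf_sup_of_galerkin 𝔄 hM.le h𝔄bdd hchat hinf hRS hGalerkin
  have hc : 1 ≤ chat⁻¹ * M := by
    obtain ⟨s₀, hs₀, hs₀_ne⟩ := hS
    have h := hstab s₀
    rw [hRfix s₀ hs₀] at h
    exact (le_mul_iff_one_le_left (norm_pos_iff.mpr hs₀_ne)).mp h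
  have hker : R (x - R x) = 0 := by rw [map_sub, hRfix _ (hRS x), sub_self]
  have hfix : R (R x - s) = R x - s := hRfix _ (S.sub_mem (hRS x) hs)
  simpa only [sub_add_sub_cancel] using
    R.norm_le_mul_norm_add_of_apply_eq_zero_of_apply_eq_self hc hstab hker hfix

/-- Abstract quasi-optimality statement underlying Theorem 4.3 (error of the
practical localized method) in Ljung–Maier–Målqvist, "A Space-Time Multiscale
Method for Parabolic Problems". -/
theorem ritz_quasi_optimality
    {X Y : Type*} [NormedAddCommGroup X] [InnerProductSpace ℝ X] [CompleteSpace X]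
    [NormedAddCommGroup Y] [NormedSpace ℝ Y]
    (𝔄 : X →ₗ[ℝ] Y →ₗ[ℝ] ℝ) (M : ℝ) (hM : 0 < M)
    (h𝔄bdd : ∀ (x : X) (y : Y), |𝔄 x y| ≤ M * ‖x‖ * ‖y‖)
    (S : Submodule ℝ X) (hS : ∃ s ∈ S, s ≠ 0)
    (YH : Submodule ℝ Y)
    (chat : ℝ) (hchat : 0 < chat)
    (hinf : ∀ s ∈ S,
      chat * ‖s‖ ≤ ⨆ w : {w : Y // w ∈ YH ∧ w ≠ 0}, 𝔄 s (w : Y) / ‖(w : Y)‖)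
    (R : X →ₗ[ℝ] X) (hRS : ∀ x : X, R x ∈ S)
    (hRfix : ∀ s ∈ S, R s = s)
    (hGalerkin : ∀ x : X, ∀ w ∈ YH, 𝔄 (x - R x) w = 0) :
    ∀ x : X, ∀ s ∈ S, ‖x - R x‖ ≤ chat⁻¹ * M * ‖x - s‖ :=
  ritz_quasi_optimality_general 𝔄 M hM h𝔄bdd S hS YH chat hchat hinf R hRS hRfix hGalerkin
end

section
/- Let L be a real Hilbert space with inner product ⟨·,·⟩ and norm ‖·‖_L, and let V ⊆ L be a linear subspace equipped with a norm ‖·‖_V satisfying the Friedrichs inequality ‖w‖_L ≤ C_F·‖w‖_V for all w ∈ V, where C_F > 0. Define the dual seminorm n₋(g) := sup{⟨g, w⟩ : w ∈ V, ‖w‖_V ≤ 1} for g ∈ L. Let V_H ⊆ V be a linear subspace satisfying the inverse inequality ‖w_H‖_V ≤ C_inv·H⁻¹·‖w_H‖_L for all w_H ∈ V_H, where C_inv, H > 0, and let J : L → L be a linear map with J(L) ⊆ V_H such that ‖J g‖_L ≤ C_n·sup{⟨g, w_H⟩ : w_H ∈ V_H, ‖w_H‖_L ≤ 1} for all g ∈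 L, where C_n > 0. Then n₋(J g) ≤ C_F·C_n·C_inv·H⁻¹·n₋(g) for every g ∈ L. -/
/-!
Friedrichs' inequality puts the `V`-unit ball inside the `L`-ball of radius `C_F`, so
`n₋(J g) ≤ C_F ‖J g‖`. The inverse inequality says that `(C_inv H⁻¹)⁻¹` times the `L`-unit ball of
`V_H` lies in the `V`-unit ball, so the supremum over `V_H` in the bound on `J` is at most
`C_inv H⁻¹ n₋(g)`.
-/

open scoped RealInnerProductSpace

namespace InnerProductSpace

variable {L : Type*} [NormedAddCommGroup L] [InnerProductSpace ℝ L]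

/-- Takes the junk value `0` when `K` is empty or `⟪g, ·⟫` is unbounded above on `K`. -/
noncomputable def supportFunction (K : Set L) (g : L) : ℝ :=
  sSup ((fun w ↦ ⟪g, w⟫) '' K)

theorem sSup_setOf_inner_eq_supportFunction {S : Type*} [SetLike S L] (V : S) (P : L → Prop)
    (g : L) : sSup {r : ℝ | ∃ w ∈ V, P w ∧ r = ⟪g, w⟫} = supportFunction {w | w ∈ V ∧ P w} g := by
  simp only [supportFunction, Set.image, Set.mem_ofPred_eq, and_assoc, eq_comm]

theorem bddAbove_image_inner_of_norm_le {K : Set L} {R : ℝ} (hK : ∀ w ∈ K, ‖w‖ ≤ R) (g : L) :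
    BddAbove ((fun w ↦ ⟪g, w⟫) '' K) := by
  refine ⟨‖g‖ * R, Set.forall_mem_image.2 fun w hw ↦ ?_⟩
  exact (real_inner_le_norm g w).trans (by gcongr; exact hK w hw)

theorem supportFunction_le_of_norm_le {K : Set L} {R : ℝ} (hR : 0 ≤ R)
    (hK : ∀ w ∈ K, ‖w‖ ≤ R) (g : L) : supportFunction K g ≤ R * ‖g‖ := by
  refine Real.sSup_le (Set.forall_mem_image.2 fun w hw ↦ ?_) (by positivity)
  calc ⟪g, w⟫ ≤ ‖g‖ * ‖w‖ := real_inner_le_norm g w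
    _ ≤ R * ‖g‖ := by rw [mul_comm]; gcongr; exact hK w hw

theorem inner_le_supportFunction {K : Set L} {g w : L}
    (hbdd : BddAbove ((fun w ↦ ⟪g, w⟫) '' K)) (hw : w ∈ K) : ⟪g, w⟫ ≤ supportFunction K g :=
  le_csSup hbdd (Set.mem_image_of_mem _ hw)

theorem supportFunction_nonneg {K : Set L} {g : L}
    (hbdd : BddAbove ((fun w ↦ ⟪g, w⟫) '' K)) (h0 : 0 ∈ K) : 0 ≤ supportFunction K g := by
  simpa using inner_le_supportFunction hbdd h0

theorem supportFunction_le_mul_of_smul_mem {K K' : Set L} {g : L} {c : ℝ} (hc : 0 < c)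
    (hbdd : BddAbove ((fun w ↦ ⟪g, w⟫) '' K')) (h0 : 0 ∈ K')
    (hKK' : ∀ w ∈ K, c⁻¹ • w ∈ K') : supportFunction K g ≤ c * supportFunction K' g := by
  refine Real.sSup_le (Set.forall_mem_image.2 fun w hw ↦ ?_)
    (mul_nonneg hc.le (supportFunction_nonneg hbdd h0))
  calc ⟪g, w⟫ = c * ⟪g, c⁻¹ • w⟫ := by rw [real_inner_smul_right, mul_inv_cancel_left₀ hc.ne']
    _ ≤ c * supportFunction K' g := by gcongr; exact inner_le_supportFunction hbdd (hKK' w hw)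

end InnerProductSpace

open InnerProductSpace

theorem dual_norm_stability_general
    {L : Type*} [NormedAddCommGroup L] [InnerProductSpace ℝ L]
    (V VH : Submodule ℝ L) (hVH : VH ≤ V)
    (nV : L → ℝ)
    (hnV_smul : ∀ (a : ℝ), ∀ w ∈ V, nV (a • w) = |a| * nV w)
    (CF : ℝ) (hCF : 0 < CF)
    (hFriedrichs : ∀ w ∈ V, ‖w‖ ≤ CF * nV w)
    (Cinv Hp : ℝ) (hCinv : 0 < Cinv) (hHp : 0 < Hp)
    (hinv : ∀ wH ∈ VH, nV wH ≤ Cinv * Hp⁻¹ * ‖wH‖)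
    (J : L →ₗ[ℝ] L)
    (Cn : ℝ) (hCn : 0 < Cn)
    (hJbound : ∀ g : L,
      ‖J g‖ ≤ Cn * sSup {r : ℝ | ∃ wH ∈ VH, ‖wH‖ ≤ 1 ∧ r = (inner ℝ g wH : ℝ)}) :
    ∀ g : L,
      sSup {r : ℝ | ∃ w ∈ V, nV w ≤ 1 ∧ r = (inner ℝ (J g) w : ℝ)} ≤
        CF * Cn * Cinv * Hp⁻¹ *
          sSup {r : ℝ | ∃ w ∈ V, nV w ≤ 1 ∧ r = (inner ℝ g w : ℝ)} := by
  intro g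
  simp only [sSup_setOf_inner_eq_supportFunction] at hJbound ⊢
  set B := {w | w ∈ V ∧ nV w ≤ 1}
  set c := Cinv * Hp⁻¹ with hc_def
  have hc : 0 < c := by positivity
  have hB_norm : ∀ w ∈ B, ‖w‖ ≤ CF := fun w ⟨hw, hw1⟩ ↦
    (hFriedrichs w hw).trans (mul_le_of_le_one_right hCF.le hw1)
  have hnV_zero : nV 0 = 0 := by simpa using hnV_smul 0 0 V.zero_mem
  have hB_zero : (0 : L) ∈ B := ⟨V.zero_mem, hnV_zero.trans_le zero_le_one⟩
  have hBH : ∀ wH ∈ {w | w ∈ VH ∧ ‖w‖ ≤ 1}, c⁻¹ • wH ∈ B := by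
    rintro wH ⟨hwH, hwH1⟩
    refine ⟨V.smul_mem _ (hVH hwH), ?_⟩
    calc nV (c⁻¹ • wH) = c⁻¹ * nV wH := by
          rw [hnV_smul _ _ (hVH hwH), abs_of_pos (inv_pos.2 hc)]
      _ ≤ c⁻¹ * (c * ‖wH‖) := by gcongr; exact hinv wH hwH
      _ ≤ 1 := by rwa [inv_mul_cancel_left₀ hc.ne']
  calc supportFunction B (J g) ≤ CF * ‖J g‖ := supportFunction_le_of_norm_le hCF.le hB_norm _
    _ ≤ CF * (Cn * (c * supportFunction B g)) := by
        refine mul_le_mul_of_nonneg_left ((hJbound g).trans ?_) hCF.le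
        gcongr
        exact supportFunction_le_mul_of_smul_mem hc
          (bddAbove_image_inner_of_norm_le hB_norm g) hB_zero hBH
    _ = CF * Cn * Cinv * Hp⁻¹ * supportFunction B g := by rw [hc_def]; ring

/-- Abstract form of the dual-norm stability estimate (estDual) from the proof of
Lemma 3.1 in Ljung–Maier–Målqvist, "A Space-Time Multiscale Method for Parabolic
Problems": ‖𝔉_H v‖_{H⁻¹} ≤ C_F·C_n·C_inv·H⁻¹·‖v‖_{H⁻¹}. -/
theorem dual_norm_stability
    {L : Type*} [NormedAddCommGroup L] [InnerProductSpace ℝ L]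
    (V VH : Submodule ℝ L) (hVH : VH ≤ V)
    (nV : L → ℝ)
    (hnV_nonneg : ∀ w ∈ V, 0 ≤ nV w)
    (hnV_smul : ∀ (a : ℝ), ∀ w ∈ V, nV (a • w) = |a| * nV w)
    (hnV_add : ∀ w ∈ V, ∀ w' ∈ V, nV (w + w') ≤ nV w + nV w')
    (hnV_def : ∀ w ∈ V, nV w = 0 → w = 0)
    (CF : ℝ) (hCF : 0 < CF)
    (hFriedrichs : ∀ w ∈ V, ‖w‖ ≤ CF * nV w)
    (Cinv Hp : ℝ) (hCinv : 0 < Cinv) (hHp : 0 < Hp)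
    (hinv : ∀ wH ∈ VH, nV wH ≤ Cinv * Hp⁻¹ * ‖wH‖)
    (J : L →ₗ[ℝ] L) (hJmem : ∀ g : L, J g ∈ VH)
    (Cn : ℝ) (hCn : 0 < Cn)
    (hJbound : ∀ g : L,
      ‖J g‖ ≤ Cn * sSup {r : ℝ | ∃ wH ∈ VH, ‖wH‖ ≤ 1 ∧ r = (inner ℝ g wH : ℝ)}) :
    ∀ g : L,
      sSup {r : ℝ | ∃ w ∈ V, nV w ≤ 1 ∧ r = (inner ℝ (J g) w : ℝ)} ≤
        CF * Cn * Cinv * Hp⁻¹ *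
          sSup {r : ℝ | ∃ w ∈ V, nV w ≤ 1 ∧ r = (inner ℝ g w : ℝ)} :=
  dual_norm_stability_general V VH hVH nV hnV_smul CF hCF hFriedrichs Cinv Hp hCinv hHp hinv J Cn
    hCn hJbound
end

section
/- Let X be a real vector space equipped with an inner product ⟨·,·⟩₀ (with induced norm ‖·‖₀), a norm ‖·‖₁, and a seminorm n₋ satisfying n₋(x) ≤ ‖x‖₀ for all x ∈ X. Let C_inv, H, 𝒯 > 0 and let μ₁, …, μ_N ∈ X be a nonzero tuple satisfying the inverse inequality ‖μ_j‖₁ ≤ C_inv·H⁻¹·‖μ_j‖₀ for each j. For j = 1, …, N let η_j : ℝ → ℝ be the hat function η_j(t) = t/𝒯 − j + 1 for t ∈ [(j−1)𝒯, j𝒯], η_j(t) = j + 1 − t/𝒯 for t ∈ (j𝒯, (j+1)𝒯], zero otherwise, and let g_j be its a.e. derivative g_j(t) = 1/𝒯 on [(j−1)𝒯, j𝒯], −1/𝒯 on (j𝒯, (j+1)𝒯], zero otherwise. Set v(t) = Σ_j μ_j·η_j(t) and v'(t) = Σ_j μ_j·g_j(t). Then Σ_j ‖μ_j‖₀² ≥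 γ · (∫₀^{N𝒯} [n₋(v'(t))² + ‖v(t)‖₁²] dt)^{1/2} · (Σ_j ‖μ_j‖₁²)^{1/2}, where γ = (√(2𝒯)·C_inv²·H⁻² + 2·𝒯^{−1/2}·C_inv·H⁻¹)⁻¹. -/
/-- The hat function η_j on the uniform temporal grid with step 𝒯. -/
noncomputable def hatFun (𝒯 : ℝ) (j : ℝ) (t : ℝ) : ℝ :=
  if t ∈ Set.Icc ((j - 1) * 𝒯) (j * 𝒯) then t / 𝒯 - j + 1
  else if t ∈ Set.Ioc (j * 𝒯) ((j + 1) * 𝒯) then j + 1 - t / 𝒯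
  else 0

/-- The a.e. derivative g_j of the hat function η_j. -/
noncomputable def hatDeriv (𝒯 : ℝ) (j : ℝ) (t : ℝ) : ℝ :=
  if t ∈ Set.Icc ((j - 1) * 𝒯) (j * 𝒯) then 1 / 𝒯
  else if t ∈ Set.Ioc (j * 𝒯) ((j + 1) * 𝒯) then -1 / 𝒯
  else 0

/-! On each grid cell only two consecutive hat functions are nonzero, so `∑ η_j ≤ 1`
everywhere and, off the null set of grid points, `∑ |g_j| ≤ 2/𝒯`. Weighted Cauchy–Schwarz
for the seminorms bounds the integrand by `∑_j 1_{supp η_j}(t) (2𝒯⁻² ‖μ_j‖₀² + ‖μ_j‖₁²)`,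
and `|supp η_j| = 2𝒯`, so the space-time energy is at most
`4𝒯⁻¹ ∑ ‖μ_j‖₀² + 2𝒯 ∑ ‖μ_j‖₁²`. The inverse inequality `∑ ‖μ_j‖₁² ≤ (C_inv/H)² ∑ ‖μ_j‖₀²`
turns both factors into multiples of `(∑ ‖μ_j‖₀²)^{1/2}`. -/

open MeasureTheory Set

section HatFunctions

variable {𝒯 : ℝ}

def hatSupp (𝒯 c : ℝ) : Set ℝ := Icc ((c - 1) * 𝒯) ((c + 1) * 𝒯)

lemma mem_hatSupp_iff (h𝒯 : 0 < 𝒯) {c t : ℝ} : t ∈ hatSupp 𝒯 c ↔ |t / 𝒯 - c| ≤ 1 := by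
  obtain ⟨u, rfl⟩ : ∃ u, t = u * 𝒯 := ⟨t / 𝒯, (div_mul_cancel₀ t h𝒯.ne').symm⟩
  simp only [hatSupp, mem_Icc, mul_le_mul_iff_of_pos_right h𝒯,
    mul_div_cancel_right₀ u h𝒯.ne', abs_le]
  constructor <;> rintro ⟨h₁, h₂⟩ <;> constructor <;> linarith

lemma hatFun_eq (h𝒯 : 0 < 𝒯) (c t : ℝ) : hatFun 𝒯 c t = max 0 (1 - |t / 𝒯 - c|) := by
  obtain ⟨u, rfl⟩ : ∃ u, t = u * 𝒯 := ⟨t / 𝒯, (div_mul_cancel₀ t h𝒯.ne').symm⟩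
  simp only [hatFun, mem_Icc, mem_Ioc, mul_le_mul_iff_of_pos_right h𝒯,
    mul_lt_mul_iff_of_pos_right h𝒯, mul_div_cancel_right₀ u h𝒯.ne']
  split_ifs <;> grind

lemma abs_hatDeriv (h𝒯 : 0 < 𝒯) (c t : ℝ) :
    |hatDeriv 𝒯 c t| = 𝒯⁻¹ * (hatSupp 𝒯 c).indicator 1 t := by
  obtain ⟨u, rfl⟩ : ∃ u, t = u * 𝒯 := ⟨t / 𝒯, (div_mul_cancel₀ t h𝒯.ne').symm⟩
  simp only [hatDeriv, hatSupp, indicator_apply, mem_Icc, mem_Ioc,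
    mul_le_mul_iff_of_pos_right h𝒯, mul_lt_mul_iff_of_pos_right h𝒯, Pi.one_apply]
  split_ifs <;> simp only [abs_div, abs_neg, abs_one, abs_zero, abs_of_pos h𝒯, one_div,
    mul_one, mul_zero] <;> grind

lemma hatFun_nonneg (h𝒯 : 0 < 𝒯) (c t : ℝ) : 0 ≤ hatFun 𝒯 c t :=
  hatFun_eq h𝒯 c t ▸ le_max_left _ _

lemma hatFun_le_indicator (h𝒯 : 0 < 𝒯) (c t : ℝ) :
    hatFun 𝒯 c t ≤ (hatSupp 𝒯 c).indicator 1 t := by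
  classical
  rw [hatFun_eq h𝒯, indicator_apply, mem_hatSupp_iff h𝒯]
  split_ifs with h
  · exact max_le zero_le_one (by simp)
  · exact (max_eq_left (by linarith)).le

end HatFunctions

lemma Finset.sum_comp_le_sum_of_eq_zero {ι α : Type*} [Fintype ι] [DecidableEq α]
    {e : ι → α} (he : Function.Injective e) {f : α → ℝ} (hf₀ : ∀ a, 0 ≤ f a) {s : Finset α}
    (hf : ∀ a ∉ s, f a = 0) : ∑ i, f (e i) ≤ ∑ a ∈ s, f a := by
  calc ∑ i, f (e i) = ∑ a ∈ Finset.univ.image e, f a :=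
        (Finset.sum_image fun _ _ _ _ h => he h).symm
    _ = ∑ a ∈ Finset.univ.image e ∩ s, f a :=
        (Finset.sum_subset Finset.inter_subset_left fun a ha has =>
          hf a fun h => has (Finset.mem_inter.2 ⟨ha, h⟩)).symm
    _ ≤ ∑ a ∈ s, f a :=
        Finset.sum_le_sum_of_subset_of_nonneg Finset.inter_subset_right fun a _ _ => hf₀ a

lemma one_le_abs_sub_intCast {u : ℝ} {m : ℤ} (hm : m ∉ ({⌊u⌋, ⌊u⌋ + 1} : Finset ℤ)) :
    1 ≤ |u - m| := by
  simp only [Finset.mem_insert, Finset.mem_singleton, not_or] at hm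
  rcases lt_or_gt_of_ne hm.1 with h | h
  · have : (m : ℝ) + 1 ≤ ⌊u⌋ := by exact_mod_cast h
    rw [abs_of_nonneg (by linarith [Int.floor_le u])]
    linarith [Int.floor_le u]
  · have : (⌊u⌋ : ℝ) + 2 ≤ m := by exact_mod_cast (by omega : ⌊u⌋ + 2 ≤ m)
    rw [abs_of_neg (by linarith [Int.lt_floor_add_one u])]
    linarith [Int.lt_floor_add_one u]

lemma one_lt_abs_sub_intCast {u : ℝ} (hu : Int.fract u ≠ 0) {m : ℤ}
    (hm : m ∉ ({⌊u⌋, ⌊u⌋ + 1} : Finset ℤ)) : 1 < |u - m| := by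
  refine (one_le_abs_sub_intCast hm).lt_of_ne fun h => hu ?_
  simp only [Finset.mem_insert, Finset.mem_singleton, not_or] at hm
  rcases abs_eq (zero_le_one' ℝ) |>.1 h.symm with h | h
  · rw [show u = ((m + 1 : ℤ) : ℝ) by push_cast; linarith, Int.fract_intCast]
  · rw [show u = ((m - 1 : ℤ) : ℝ) by push_cast; linarith, Int.fract_intCast]

section HatSums

variable {𝒯 : ℝ} {ι : Type*} [Fintype ι] {c : ι → ℤ}

lemma sum_hatFun_le_one (h𝒯 : 0 < 𝒯) (hc : Function.Injective c) (t : ℝ) :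
    ∑ i, hatFun 𝒯 (c i) t ≤ 1 := by
  set u := t / 𝒯
  simp only [hatFun_eq h𝒯]
  calc ∑ i, max 0 (1 - |u - c i|)
      ≤ ∑ m ∈ {⌊u⌋, ⌊u⌋ + 1}, max 0 (1 - |u - m|) :=
        Finset.sum_comp_le_sum_of_eq_zero (f := fun m : ℤ => max 0 (1 - |u - m|)) hc
          (fun _ => le_max_left _ _)
          fun m hm => max_eq_left (by linarith [one_le_abs_sub_intCast hm])
    _ ≤ 1 := by
      have htri : 1 ≤ |u - ⌊u⌋| + |u - (⌊u⌋ + 1)| := by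
        simpa [abs_sub_comm] using abs_sub_le (⌊u⌋ : ℝ) u (⌊u⌋ + 1)
      rw [Finset.sum_pair (by omega)]
      push_cast
      simp only [max_def]
      split_ifs <;> linarith [abs_nonneg (u - ⌊u⌋), abs_nonneg (u - (⌊u⌋ + 1))]

-- At the grid points three supports meet, hence the hypothesis on `t`.
lemma sum_indicator_hatSupp_le_two (h𝒯 : 0 < 𝒯) (hc : Function.Injective c) {t : ℝ}
    (ht : Int.fract (t / 𝒯) ≠ 0) : ∑ i, (hatSupp 𝒯 (c i)).indicator 1 t ≤ (2 : ℝ) := by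
  calc ∑ i, (hatSupp 𝒯 (c i)).indicator 1 t
      ≤ ∑ m ∈ {⌊t / 𝒯⌋, ⌊t / 𝒯⌋ + 1}, (hatSupp 𝒯 m).indicator (1 : ℝ → ℝ) t :=
        Finset.sum_comp_le_sum_of_eq_zero (f := fun m : ℤ => (hatSupp 𝒯 m).indicator 1 t) hc
          (fun _ => indicator_nonneg (fun _ _ => zero_le_one) _)
          fun m hm => indicator_of_notMem (by
            rw [mem_hatSupp_iff h𝒯, not_le]; exact one_lt_abs_sub_intCast ht hm) _
    _ ≤ ∑ m ∈ {⌊t / 𝒯⌋, ⌊t / 𝒯⌋ + 1}, (1 : ℝ) :=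
        Finset.sum_le_sum fun _ _ => indicator_le_self' (fun _ _ => zero_le_one) _
    _ = 2 := by rw [Finset.sum_pair (by omega)]; norm_num

end HatSums

lemma Seminorm.sq_map_sum_smul_le {X ι : Type*} [AddCommGroup X] [Module ℝ X]
    (p : Seminorm ℝ X) (s : Finset ι) (w : ι → ℝ) (x : ι → X) :
    p (∑ i ∈ s, w i • x i) ^ 2 ≤ (∑ i ∈ s, |w i|) * ∑ i ∈ s, |w i| * p (x i) ^ 2 := by
  have htri : p (∑ i ∈ s, w i • x i) ≤ ∑ i ∈ s, |w i| * p (x i) := by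
    refine (Finset.le_sum_of_subadditive p (map_zero p).le (map_add_le_add p) s _).trans_eq ?_
    simp only [map_smul_eq_mul, Real.norm_eq_abs]
  calc p (∑ i ∈ s, w i • x i) ^ 2 ≤ (∑ i ∈ s, |w i| * p (x i)) ^ 2 :=
        pow_le_pow_left₀ (apply_nonneg p _) htri 2
    _ ≤ _ := Finset.sum_sq_le_sum_mul_sum_of_sq_le_mul s (fun i _ => abs_nonneg _)
        (fun i _ => by positivity) fun i _ => (by ring : _ = _).le

section HatEnergy

variable {𝒯 : ℝ} {X ι : Type*} [AddCommGroup X] [Module ℝ X] [Fintype ι] {c : ι → ℤ}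

lemma sq_seminorm_sum_hatFun_smul_le (h𝒯 : 0 < 𝒯) (hc : Function.Injective c)
    (p : Seminorm ℝ X) (x : ι → X) (t : ℝ) :
    p (∑ i, hatFun 𝒯 (c i) t • x i) ^ 2 ≤
      ∑ i, (hatSupp 𝒯 (c i)).indicator 1 t * p (x i) ^ 2 := by
  have habs : ∀ i, |hatFun 𝒯 (c i) t| = hatFun 𝒯 (c i) t := fun i =>
    abs_of_nonneg (hatFun_nonneg h𝒯 _ t)
  calc p (∑ i, hatFun 𝒯 (c i) t • x i) ^ 2
      ≤ (∑ i, hatFun 𝒯 (c i) t) * ∑ i, hatFun 𝒯 (c i) t * p (x i) ^ 2 := by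
        simpa only [habs] using p.sq_map_sum_smul_le Finset.univ (fun i => hatFun 𝒯 (c i) t) x
    _ ≤ 1 * ∑ i, (hatSupp 𝒯 (c i)).indicator 1 t * p (x i) ^ 2 := by
        gcongr with i
        · exact Finset.sum_nonneg fun i _ => mul_nonneg (hatFun_nonneg h𝒯 _ t) (sq_nonneg _)
        · exact sum_hatFun_le_one h𝒯 hc t
        · exact hatFun_le_indicator h𝒯 _ t
    _ = _ := one_mul _

lemma sq_seminorm_sum_hatDeriv_smul_le (h𝒯 : 0 < 𝒯) (hc : Function.Injective c)
    (q : Seminorm ℝ X) (x : ι → X) {t : ℝ} (ht : Int.fract (t / 𝒯) ≠ 0) :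
    q (∑ i, hatDeriv 𝒯 (c i) t • x i) ^ 2 ≤
      ∑ i, (hatSupp 𝒯 (c i)).indicator 1 t * (2 * 𝒯⁻¹ ^ 2 * q (x i) ^ 2) := by
  calc q (∑ i, hatDeriv 𝒯 (c i) t • x i) ^ 2
      ≤ (∑ i, |hatDeriv 𝒯 (c i) t|) * ∑ i, |hatDeriv 𝒯 (c i) t| * q (x i) ^ 2 :=
        q.sq_map_sum_smul_le Finset.univ _ x
    _ = (𝒯⁻¹ * ∑ i, (hatSupp 𝒯 (c i)).indicator 1 t) *
          (𝒯⁻¹ * ∑ i, (hatSupp 𝒯 (c i)).indicator 1 t * q (x i) ^ 2) := by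
        simp only [abs_hatDeriv h𝒯, mul_assoc, ← Finset.mul_sum]
    _ ≤ (𝒯⁻¹ * 2) * (𝒯⁻¹ * ∑ i, (hatSupp 𝒯 (c i)).indicator 1 t * q (x i) ^ 2) := by
        gcongr
        · exact mul_nonneg (inv_nonneg.2 h𝒯.le) (Finset.sum_nonneg fun i _ =>
            mul_nonneg (indicator_nonneg (fun _ _ => zero_le_one) _) (sq_nonneg _))
        · exact sum_indicator_hatSupp_le_two h𝒯 hc ht
    _ = _ := by
        rw [Finset.mul_sum, Finset.mul_sum]
        exact Finset.sum_congr rfl fun i _ => by ring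

end HatEnergy

lemma ae_fract_div_ne_zero {𝒯 : ℝ} (h𝒯 : 𝒯 ≠ 0) : ∀ᵐ t : ℝ, Int.fract (t / 𝒯) ≠ 0 := by
  filter_upwards [(countable_range fun k : ℤ => (k : ℝ) * 𝒯).ae_notMem volume] with t ht h0
  rw [Int.fract, sub_eq_zero] at h0
  exact ht ⟨⌊t / 𝒯⌋, show (⌊t / 𝒯⌋ : ℝ) * 𝒯 = t by rw [← h0, div_mul_cancel₀ t h𝒯]⟩

lemma integral_le_mul_sum_of_ae_le_sum_indicator {α ι : Type*} [MeasurableSpace α]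
    {μ : Measure α} (s : Finset ι) {A : ι → Set α} {w : ι → ℝ} {f : α → ℝ} {L : ℝ}
    (hL : 0 ≤ L) (hA : ∀ i ∈ s, MeasurableSet (A i))
    (hμA : ∀ i ∈ s, μ (A i) ≤ ENNReal.ofReal L) (hw : ∀ i ∈ s, 0 ≤ w i) (hf₀ : 0 ≤ᵐ[μ] f)
    (hf : ∀ᵐ x ∂μ, f x ≤ ∑ i ∈ s, (A i).indicator 1 x * w i) :
    ∫ x, f x ∂μ ≤ L * ∑ i ∈ s, w i := by
  have hint : ∀ i ∈ s, Integrable (fun x => (A i).indicator 1 x * w i) μ := fun i hi =>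
    ((integrableOn_const ((hμA i hi).trans_lt ENNReal.ofReal_lt_top).ne).integrable_indicator
      (hA i hi)).mul_const _
  calc ∫ x, f x ∂μ ≤ ∫ x, ∑ i ∈ s, (A i).indicator 1 x * w i ∂μ :=
        integral_mono_of_nonneg hf₀ (integrable_finsetSum s hint) hf
    _ = ∑ i ∈ s, μ.real (A i) * w i := by
        rw [integral_finsetSum s hint]
        exact Finset.sum_congr rfl fun i hi => by
          rw [integral_mul_const, integral_indicator_one (hA i hi)]
    _ ≤ ∑ i ∈ s, L * w i :=
        Finset.sum_le_sum fun i hi =>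
          mul_le_mul_of_nonneg_right (ENNReal.toReal_le_of_le_ofReal hL (hμA i hi)) (hw i hi)
    _ = L * ∑ i ∈ s, w i := (Finset.mul_sum _ _ _).symm

lemma volume_hatSupp (𝒯 c : ℝ) : volume (hatSupp 𝒯 c) = ENNReal.ofReal (2 * 𝒯) := by
  rw [hatSupp, Real.volume_Icc]; ring_nf

theorem setIntegral_hat_energy_le {𝒯 : ℝ} {X ι : Type*} [AddCommGroup X] [Module ℝ X]
    [Fintype ι] {c : ι → ℤ} (h𝒯 : 0 < 𝒯) (hc : Function.Injective c) (p q : Seminorm ℝ X)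
    (x : ι → X) (s : Set ℝ) :
    ∫ t in s, (q (∑ i, hatDeriv 𝒯 (c i) t • x i) ^ 2 +
        p (∑ i, hatFun 𝒯 (c i) t • x i) ^ 2) ≤
      4 * 𝒯⁻¹ * ∑ i, q (x i) ^ 2 + 2 * 𝒯 * ∑ i, p (x i) ^ 2 := by
  have hbound : ∀ᵐ t ∂volume.restrict s,
      q (∑ i, hatDeriv 𝒯 (c i) t • x i) ^ 2 + p (∑ i, hatFun 𝒯 (c i) t • x i) ^ 2 ≤
        ∑ i, (hatSupp 𝒯 (c i)).indicator 1 t *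
          (2 * 𝒯⁻¹ ^ 2 * q (x i) ^ 2 + p (x i) ^ 2) := by
    filter_upwards [ae_restrict_of_ae (ae_fract_div_ne_zero h𝒯.ne')] with t ht
    refine (add_le_add (sq_seminorm_sum_hatDeriv_smul_le h𝒯 hc q x ht)
      (sq_seminorm_sum_hatFun_smul_le h𝒯 hc p x t)).trans_eq ?_
    rw [← Finset.sum_add_distrib]
    exact Finset.sum_congr rfl fun i _ => by ring
  refine (integral_le_mul_sum_of_ae_le_sum_indicator Finset.univ (by positivity)
    (fun i _ => measurableSet_Icc)
    (fun i _ => (Measure.restrict_apply_le _ _).trans (volume_hatSupp 𝒯 _).le)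
    (fun i _ => by positivity) (ae_of_all _ fun t => by positivity) hbound).trans_eq ?_
  rw [Finset.sum_add_distrib, ← Finset.mul_sum]
  field_simp
  ring

lemma inv_mul_sqrt_mul_sqrt_le {𝒯 a I S₀ S₁ : ℝ} (h𝒯 : 0 < 𝒯) (ha : 0 ≤ a) (hS₀ : 0 ≤ S₀)
    (hS₁ : S₁ ≤ a ^ 2 * S₀) (hI : I ≤ 4 * 𝒯⁻¹ * S₀ + 2 * 𝒯 * S₁) :
    (√(2 * 𝒯) * a ^ 2 + 2 * (√𝒯)⁻¹ * a)⁻¹ * √I * √S₁ ≤ S₀ := by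
  have h2𝒯 : √(2 * 𝒯) ^ 2 = 2 * 𝒯 := Real.sq_sqrt (by positivity)
  have h𝒯inv : (√𝒯)⁻¹ ^ 2 = 𝒯⁻¹ := by rw [inv_pow, Real.sq_sqrt h𝒯.le]
  set b := √(2 * 𝒯) * a + 2 * (√𝒯)⁻¹ with hb_def
  have hb : 0 ≤ b := by positivity
  have hb2 : b ^ 2 = 2 * 𝒯 * a ^ 2 + 4 * 𝒯⁻¹ + 4 * (√(2 * 𝒯) * a * (√𝒯)⁻¹) := by
    rw [hb_def, add_sq, mul_pow, mul_pow, h2𝒯, h𝒯inv]; ring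
  have hsqrtI : √I ≤ b * √S₀ := by
    rw [Real.sqrt_le_iff, mul_pow, Real.sq_sqrt hS₀]
    refine ⟨by positivity, hI.trans ?_⟩
    have hcross : 0 ≤ √(2 * 𝒯) * a * (√𝒯)⁻¹ * S₀ := by positivity
    rw [hb2]
    nlinarith
  have hsqrtS₁ : √S₁ ≤ a * √S₀ := by
    rw [Real.sqrt_le_iff, mul_pow, Real.sq_sqrt hS₀]
    exact ⟨by positivity, hS₁⟩
  have hK : √(2 * 𝒯) * a ^ 2 + 2 * (√𝒯)⁻¹ * a = b * a := by ring
  rw [hK, mul_assoc]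
  calc (b * a)⁻¹ * (√I * √S₁) ≤ (b * a)⁻¹ * ((b * √S₀) * (a * √S₀)) := by
        gcongr
    _ = (b * a)⁻¹ * (b * a) * (√S₀ * √S₀) := by ring
    _ = (b * a)⁻¹ * (b * a) * S₀ := by rw [Real.mul_self_sqrt hS₀]
    _ ≤ S₀ := by
        rcases (mul_nonneg hb ha).eq_or_lt with h | h
        · rw [← h]; simpa using hS₀
        · rw [inv_mul_cancel₀ h.ne', one_mul]

theorem infsup_terminal_constraint_general
    {X : Type*} [NormedAddCommGroup X] [InnerProductSpace ℝ X]
    (n1 nneg : X → ℝ)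
    (hn1_smul : ∀ (a : ℝ) (x : X), n1 (a • x) = |a| * n1 x)
    (hn1_add : ∀ x y : X, n1 (x + y) ≤ n1 x + n1 y)
    (hnneg_smul : ∀ (a : ℝ) (x : X), nneg (a • x) = |a| * nneg x)
    (hnneg_add : ∀ x y : X, nneg (x + y) ≤ nneg x + nneg y)
    (hnneg_le : ∀ x : X, nneg x ≤ ‖x‖)
    (Cinv Hp 𝒯 : ℝ) (hCinv : 0 < Cinv) (hHp : 0 < Hp) (h𝒯 : 0 < 𝒯)
    (N : ℕ) (μ : Fin N → X)
    (hinv : ∀ j, n1 (μ j) ≤ Cinv * Hp⁻¹ * ‖μ j‖) :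
    (Real.sqrt (2 * 𝒯) * Cinv ^ 2 * (Hp ^ 2)⁻¹ +
        2 * (Real.sqrt 𝒯)⁻¹ * Cinv * Hp⁻¹)⁻¹ *
      Real.sqrt (∫ t in Set.Ioc (0 : ℝ) (N * 𝒯),
        ((nneg (∑ j : Fin N, hatDeriv 𝒯 ((j.val : ℝ) + 1) t • μ j)) ^ 2 +
          (n1 (∑ j : Fin N, hatFun 𝒯 ((j.val : ℝ) + 1) t • μ j)) ^ 2)) *
      Real.sqrt (∑ j, (n1 (μ j)) ^ 2) ≤
    ∑ j, ‖μ j‖ ^ 2 := by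
  let p : Seminorm ℝ X := .of n1 hn1_add fun a x => by rw [hn1_smul, Real.norm_eq_abs]
  let q : Seminorm ℝ X := .of nneg hnneg_add fun a x => by rw [hnneg_smul, Real.norm_eq_abs]
  have hI := setIntegral_hat_energy_le (c := fun j : Fin N => (j.val + 1 : ℤ)) h𝒯
    (fun i j h => Fin.ext (by simpa using h)) p q μ (Ioc 0 (N * 𝒯))
  push_cast at hI
  have hq : ∑ j, q (μ j) ^ 2 ≤ ∑ j, ‖μ j‖ ^ 2 :=
    Finset.sum_le_sum fun j _ => pow_le_pow_left₀ (apply_nonneg q _) (hnneg_le _) 2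
  have hp : ∑ j, p (μ j) ^ 2 ≤ (Cinv * Hp⁻¹) ^ 2 * ∑ j, ‖μ j‖ ^ 2 := by
    rw [Finset.mul_sum]
    exact Finset.sum_le_sum fun j _ =>
      (pow_le_pow_left₀ (apply_nonneg p _) (hinv j) 2).trans_eq (mul_pow _ _ 2)
  rw [show √(2 * 𝒯) * Cinv ^ 2 * (Hp ^ 2)⁻¹ + 2 * (√𝒯)⁻¹ * Cinv * Hp⁻¹ =
    √(2 * 𝒯) * (Cinv * Hp⁻¹) ^ 2 + 2 * (√𝒯)⁻¹ * (Cinv * Hp⁻¹) by ring]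
  exact inv_mul_sqrt_mul_sqrt_le h𝒯 (by positivity)
    (Finset.sum_nonneg fun j _ => sq_nonneg ‖μ j‖) hp
    (hI.trans (by gcongr 4 * 𝒯⁻¹ * ?_ + _))

/-- Quantified version of the inf-sup condition (infsupC) for the terminal-time
constraint forms, from the proof of Lemma 3.3 in Ljung–Maier–Målqvist, "A
Space-Time Multiscale Method for Parabolic Problems". -/
theorem infsup_terminal_constraint
    {X : Type*} [NormedAddCommGroup X] [InnerProductSpace ℝ X]
    (n1 nneg : X → ℝ)
    (hn1_nonneg : ∀ x : X, 0 ≤ n1 x)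
    (hn1_smul : ∀ (a : ℝ) (x : X), n1 (a • x) = |a| * n1 x)
    (hn1_add : ∀ x y : X, n1 (x + y) ≤ n1 x + n1 y)
    (hn1_def : ∀ x : X, n1 x = 0 → x = 0)
    (hnneg_nonneg : ∀ x : X, 0 ≤ nneg x)
    (hnneg_smul : ∀ (a : ℝ) (x : X), nneg (a • x) = |a| * nneg x)
    (hnneg_add : ∀ x y : X, nneg (x + y) ≤ nneg x + nneg y)
    (hnneg_le : ∀ x : X, nneg x ≤ ‖x‖)
    (Cinv Hp 𝒯 : ℝ) (hCinv : 0 < Cinv) (hHp : 0 < Hp) (h𝒯 : 0 < 𝒯)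
    (N : ℕ) (μ : Fin N → X) (hμ_ne : μ ≠ 0)
    (hinv : ∀ j, n1 (μ j) ≤ Cinv * Hp⁻¹ * ‖μ j‖) :
    (Real.sqrt (2 * 𝒯) * Cinv ^ 2 * (Hp ^ 2)⁻¹ +
        2 * (Real.sqrt 𝒯)⁻¹ * Cinv * Hp⁻¹)⁻¹ *
      Real.sqrt (∫ t in Set.Ioc (0 : ℝ) (N * 𝒯),
        ((nneg (∑ j : Fin N, hatDeriv 𝒯 ((j.val : ℝ) + 1) t • μ j)) ^ 2 +
          (n1 (∑ j : Fin N, hatFun 𝒯 ((j.val : ℝ) + 1) t • μ j)) ^ 2)) *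
      Real.sqrt (∑ j, (n1 (μ j)) ^ 2) ≤
    ∑ j, ‖μ j‖ ^ 2 :=
  infsup_terminal_constraint_general n1 nneg hn1_smul hn1_add hnneg_smul hnneg_add hnneg_le Cinv Hp
    𝒯 hCinv hHp h𝒯 N μ hinv
end
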